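/- arXiv:2509.10075 — 10 statements merged into one kernel-verified Lean document; each statement's English description precedes it below -/
import Mathlib

section
/- Consider the LP relaxation LP_N of the natural BPPS formulation with k bins: variables x_{ib}, y_{cb}, z_b in [0,1], constraints Σ_b x_{ib} = 1 for each item i, Σ_i w_i x_{ib} + Σ_c s_c y_{cb} ≤ d z_b for each bin b, and x_{ib} ≤ y_{cb} for each class c, item i ∈ I_c, and bin b; the objective minimizes Σ_b (r z_b + Σ_c f_c y_{cb}). Then the optimal value of LP_N equals (r/d)(Σ_{i∈I} w_i + Σ_{c∈C} s_c) + Σ_{c∈C} f_c, attained by x_{ib} = 1/k, y_{cb} = 1/k, z_b = (Σ_i w_i + Σ_c s_c)/(k d). -/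
/-- Feasibility for the LP relaxation LP_N of the natural BPPS formulation. -/
def LPFeasible (n m k : ℕ) (cls : Fin n → Fin m) (w : Fin n → ℕ) (s : Fin m → ℕ) (d : ℕ)
    (x : Fin n → Fin k → ℚ) (y : Fin m → Fin k → ℚ) (z : Fin k → ℚ) : Prop :=
  (∀ i b, 0 ≤ x i b ∧ x i b ≤ 1) ∧
  (∀ c b, 0 ≤ y c b ∧ y c b ≤ 1) ∧
  (∀ b, 0 ≤ z b ∧ z b ≤ 1) ∧
  (∀ i, ∑ b, x i b = 1) ∧
  (∀ b, (∑ i, (w i : ℚ) * x i b) + ∑ c, (s c : ℚ) * y c b ≤ (d : ℚ) * z b) ∧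
  (∀ i b, x i b ≤ y (cls i) b)

/-- Objective of LP_N. -/
def LPObj (m k r : ℕ) (f : Fin m → ℕ) (y : Fin m → Fin k → ℚ) (z : Fin k → ℚ) : ℚ :=
  ∑ b, ((r : ℚ) * z b + ∑ c, (f c : ℚ) * y c b)

/-- The optimal value of LP_N equals `(r/d)(Σ w_i + Σ s_c) + Σ f_c`, attained by
`x_{ib} = 1/k`, `y_{cb} = 1/k`, `z_b = (Σ w_i + Σ s_c)/(k d)`. -/
theorem stmt3 (n m k d r : ℕ) (cls : Fin n → Fin m) (w : Fin n → ℕ) (s f : Fin m → ℕ)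
    (hw : ∀ i, 0 < w i) (hd : 0 < d) (hr : 0 < r) (hk : 1 ≤ k)
    (hcls : ∀ c, ∃ i, cls i = c)
    (hfeas : (∑ i, w i) + ∑ c, s c ≤ k * d) :
    IsLeast {v : ℚ | ∃ x y z, LPFeasible n m k cls w s d x y z ∧ LPObj m k r f y z = v}
        ((r : ℚ) / d * ((∑ i, (w i : ℚ)) + ∑ c, (s c : ℚ)) + ∑ c, (f c : ℚ)) ∧
      LPFeasible n m k cls w s d (fun _ _ => 1 / k) (fun _ _ => 1 / k)
        (fun _ => ((∑ i, (w i : ℚ)) + ∑ c, (s c : ℚ)) / (k * d)) ∧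
      LPObj m k r f (fun _ _ => 1 / k)
        (fun _ => ((∑ i, (w i : ℚ)) + ∑ c, (s c : ℚ)) / (k * d))
        = (r : ℚ) / d * ((∑ i, (w i : ℚ)) + ∑ c, (s c : ℚ)) + ∑ c, (f c : ℚ) := by
  have hk0 : (0:ℚ) < k := by exact_mod_cast hk
  have hd0 : (0:ℚ) < d := by exact_mod_cast hd
  set W : ℚ := ∑ i, (w i : ℚ) with hW
  set S : ℚ := ∑ c, (s c : ℚ) with hS
  have hW0 : 0 ≤ W := Finset.sum_nonneg fun i _ => by positivity
  have hS0 : 0 ≤ S := Finset.sum_nonneg fun c _ => by positivity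
  have hWS : W + S ≤ (k:ℚ) * d := by
    have : ((∑ i, w i : ℕ) : ℚ) + ((∑ c, s c : ℕ) : ℚ) ≤ ((k * d : ℕ) : ℚ) := by
      exact_mod_cast hfeas
    push_cast at this
    simpa [hW, hS] using this
  have hfeas' : LPFeasible n m k cls w s d (fun _ _ => 1 / k) (fun _ _ => 1 / k)
      (fun _ => (W + S) / (k * d)) := by
    refine ⟨fun i b => ⟨by positivity, ?_⟩, fun c b => ⟨by positivity, ?_⟩,
      fun b => ⟨by positivity, ?_⟩, fun i => ?_, fun b => ?_, fun i b => le_refl _⟩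
    · rw [div_le_one hk0]; exact_mod_cast hk
    · rw [div_le_one hk0]; exact_mod_cast hk
    · rw [div_le_one (by positivity)]; exact hWS
    · simp [Finset.sum_const, Finset.card_univ, mul_one_div]
      field_simp
    · have h1 : (∑ i, (w i : ℚ) * (1 / k)) + ∑ c, (s c : ℚ) * (1 / k) = (W + S) / k := by
        rw [← Finset.sum_mul, ← Finset.sum_mul, ← hW, ← hS]; ring
      rw [h1]
      apply le_of_eq
      field_simp
  have hobj : LPObj m k r f (fun _ _ => 1 / k) (fun _ => (W + S) / (k * d))
      = (r:ℚ) / d * (W + S) + ∑ c, (f c : ℚ) := by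
    unfold LPObj
    rw [Finset.sum_const, Finset.card_univ, Fintype.card_fin]
    have : (∑ c, (f c : ℚ) * (1 / k)) = (∑ c, (f c : ℚ)) / k := by
      rw [← Finset.sum_mul]; ring
    rw [this]
    simp only [nsmul_eq_mul]
    field_simp
  refine ⟨⟨⟨_, _, _, hfeas', hobj⟩, ?_⟩, hfeas', hobj⟩
  rintro v ⟨x, y, z, ⟨hx, hy, hz, hxsum, hcap, hxy⟩, rfl⟩
  have hy1 : ∀ c, 1 ≤ ∑ b, y c b := by
    intro c
    obtain ⟨i, rfl⟩ := hcls c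
    rw [← hxsum i]
    exact Finset.sum_le_sum fun b _ => hxy i b
  have hzsum : (W + S) / d ≤ ∑ b, z b := by
    rw [div_le_iff₀ hd0, mul_comm]
    calc W + S ≤ (∑ i, (w i : ℚ) * ∑ b, x i b) + ∑ c, (s c : ℚ) * ∑ b, y c b := by
          apply add_le_add
          · apply le_of_eq
            rw [hW]; exact Finset.sum_congr rfl fun i _ => by rw [hxsum i, mul_one]
          · rw [hS]
            exact Finset.sum_le_sum fun c _ => le_mul_of_one_le_right (by positivity) (hy1 c)
      _ = ∑ b, ((∑ i, (w i : ℚ) * x i b) + ∑ c, (s c : ℚ) * y c b) := by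
          rw [Finset.sum_add_distrib]
          congr 1 <;> rw [Finset.sum_comm] <;>
            exact Finset.sum_congr rfl fun _ _ => by rw [← Finset.mul_sum] <;> rfl
      _ ≤ ∑ b, (d:ℚ) * z b := Finset.sum_le_sum fun b _ => hcap b
      _ = (d:ℚ) * ∑ b, z b := by rw [← Finset.mul_sum]
  unfold LPObj
  rw [Finset.sum_add_distrib, ← Finset.mul_sum]
  apply add_le_add
  · calc (r:ℚ) / d * (W + S) = (r:ℚ) * ((W + S) / d) := by ring
      _ ≤ (r:ℚ) * ∑ b, z b := mul_le_mul_of_nonneg_left hzsum (by positivity)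
  · calc (∑ c, (f c : ℚ)) ≤ ∑ c, (f c : ℚ) * ∑ b, y c b := by
          exact Finset.sum_le_sum fun c _ => le_mul_of_one_le_right (by positivity) (hy1 c)
      _ = ∑ b, ∑ c, (f c : ℚ) * y c b := by
          rw [Finset.sum_comm]
          exact Finset.sum_congr rfl fun c _ => by rw [← Finset.mul_sum]
end

section
/- Every feasible solution of LP_N satisfies the lower bound: the objective Σ_b (r z_b + Σ_c f_c y_{cb}) is at least (r/d)(Σ_{i∈I} w_i + Σ_{c∈C} s_c) + Σ_{c∈C} f_c. -/
/-- Every feasible solution of LP_N has objective value at least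
`(r/d)(Σ w_i + Σ s_c) + Σ f_c`. -/
theorem stmt4 (n m k d r : ℕ) (cls : Fin n → Fin m) (w : Fin n → ℕ) (s f : Fin m → ℕ)
    (hw : ∀ i, 0 < w i) (hd : 0 < d) (hr : 0 < r)
    (hcls : ∀ c, ∃ i, cls i = c)
    (x : Fin n → Fin k → ℚ) (y : Fin m → Fin k → ℚ) (z : Fin k → ℚ)
    (hfeas : LPFeasible n m k cls w s d x y z) :
    (r : ℚ) / d * ((∑ i, (w i : ℚ)) + ∑ c, (s c : ℚ)) + ∑ c, (f c : ℚ)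
      ≤ ∑ b, ((r : ℚ) * z b + ∑ c, (f c : ℚ) * y c b) := by
  obtain ⟨hx, hy, hz, hsum, hcap, hxy⟩ := hfeas
  have hdQ : (0:ℚ) < (d:ℚ) := by exact_mod_cast hd
  have hrQ : (0:ℚ) ≤ (r:ℚ) := by positivity
  -- each class has total y at least 1
  have hy1 : ∀ c, (1:ℚ) ≤ ∑ b, y c b := by
    intro c
    obtain ⟨i, hi⟩ := hcls c
    calc (1:ℚ) = ∑ b, x i b := (hsum i).symm
      _ ≤ ∑ b, y c b := Finset.sum_le_sum (fun b _ => hi ▸ hxy i b)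
  -- total weight bound
  have hS : (∑ i, (w i : ℚ)) + ∑ c, (s c : ℚ) ≤ (d:ℚ) * ∑ b, z b := by
    have h1 : ∑ i, (w i : ℚ) = ∑ b, ∑ i, (w i : ℚ) * x i b := by
      rw [Finset.sum_comm]
      exact Finset.sum_congr rfl fun i _ => by
        rw [← Finset.mul_sum, hsum i, mul_one]
    have h2 : ∑ c, (s c : ℚ) ≤ ∑ b, ∑ c, (s c : ℚ) * y c b := by
      rw [Finset.sum_comm]
      refine Finset.sum_le_sum fun c _ => ?_
      rw [← Finset.mul_sum]
      calc (s c : ℚ) = (s c : ℚ) * 1 := (mul_one _).symm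
        _ ≤ (s c : ℚ) * ∑ b, y c b := by
            apply mul_le_mul_of_nonneg_left (hy1 c) (by positivity)
    calc (∑ i, (w i : ℚ)) + ∑ c, (s c : ℚ)
        ≤ ∑ b, ((∑ i, (w i : ℚ) * x i b) + ∑ c, (s c : ℚ) * y c b) := by
          rw [Finset.sum_add_distrib]; exact add_le_add (le_of_eq h1) h2
      _ ≤ ∑ b, (d:ℚ) * z b := Finset.sum_le_sum fun b _ => hcap b
      _ = (d:ℚ) * ∑ b, z b := (Finset.mul_sum _ _ _).symm
  -- split objective
  have hobj : ∑ b, ((r : ℚ) * z b + ∑ c, (f c : ℚ) * y c b)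
      = (r:ℚ) * ∑ b, z b + ∑ c, (f c : ℚ) * ∑ b, y c b := by
    rw [Finset.sum_add_distrib, ← Finset.mul_sum, Finset.sum_comm]
    congr 1
    exact Finset.sum_congr rfl fun c _ => (Finset.mul_sum _ _ _).symm
  rw [hobj]
  apply add_le_add
  · calc (r:ℚ) / d * ((∑ i, (w i : ℚ)) + ∑ c, (s c : ℚ))
        ≤ (r:ℚ) / d * ((d:ℚ) * ∑ b, z b) := by
          apply mul_le_mul_of_nonneg_left hS (by positivity)
      _ = (r:ℚ) * ∑ b, z b := by field_simp
  · refine Finset.sum_le_sum fun c _ => ?_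
    calc (f c : ℚ) = (f c : ℚ) * 1 := (mul_one _).symm
      _ ≤ (f c : ℚ) * ∑ b, y c b := by
          apply mul_le_mul_of_nonneg_left (hy1 c) (by positivity)
end

section
/- For every feasible 0-1 solution of the natural BPPS formulation ILP_N, and every class c, Σ_{b∈B} y_{cb} ≥ γ_c, where γ_c = ⌈(Σ_{i∈I_c} w_i)/(d - s_c)⌉ (the Minimum Classes Inequality). -/
/-- For every feasible 0-1 solution of ILP_N and every class `c`,
`Σ_b y_{cb} ≥ γ_c` where `γ_c = ⌈(Σ_{i ∈ I_c} w_i)/(d - s_c)⌉`. -/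
theorem stmt5 (n m k d : ℕ) (cls : Fin n → Fin m) (w : Fin n → ℕ) (s : Fin m → ℕ)
    (hw : ∀ i, 0 < w i) (hd : 0 < d)
    (hws : ∀ i, w i + s (cls i) ≤ d)
    (hcls : ∀ c, ∃ i, cls i = c)
    (x : Fin n → Fin k → ℕ) (y : Fin m → Fin k → ℕ) (z : Fin k → ℕ)
    (hx01 : ∀ i b, x i b ≤ 1) (hy01 : ∀ c b, y c b ≤ 1) (hz01 : ∀ b, z b ≤ 1)
    (hass : ∀ i, ∑ b, x i b = 1)
    (hcap : ∀ b, (∑ i, w i * x i b) + ∑ c, s c * y c b ≤ d * z b)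
    (hlink : ∀ i b, x i b ≤ y (cls i) b)
    (c : Fin m) :
    ⌈(∑ i ∈ Finset.univ.filter (fun i => cls i = c), (w i : ℚ)) / ((d : ℚ) - s c)⌉
      ≤ ∑ b, (y c b : ℤ) := by
  classical
  set Ic := Finset.univ.filter (fun i => cls i = c) with hIc
  -- d - s c > 0
  obtain ⟨i0, hi0⟩ := hcls c
  have hsd : s c < d := by
    have h1 := hws i0
    have h0 := hw i0
    rw [hi0] at h1
    omega
  -- per-bin bound
  have hbin : ∀ b, ∑ i ∈ Ic, w i * x i b ≤ (d - s c) * y c b := by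
    intro b
    rcases Nat.le_one_iff_eq_zero_or_eq_one.mp (hy01 c b) with h0 | h1
    · have : ∀ i ∈ Ic, w i * x i b = 0 := by
        intro i hi
        simp only [hIc, Finset.mem_filter] at hi
        have := hlink i b
        rw [hi.2, h0] at this
        have hx0 : x i b = 0 := Nat.le_zero.mp this
        simp [hx0]
      rw [Finset.sum_eq_zero this]
      exact Nat.zero_le _
    · have hcapb := hcap b
      have hz : d * z b ≤ d := by
        have := hz01 b
        nlinarith
      have hsub : ∑ i ∈ Ic, w i * x i b ≤ ∑ i, w i * x i b :=
        Finset.sum_le_sum_of_subset (Finset.subset_univ Ic)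
      have hsc : s c ≤ ∑ c', s c' * y c' b := by
        calc s c = s c * y c b := by rw [h1, mul_one]
        _ ≤ ∑ c', s c' * y c' b :=
          Finset.single_le_sum (f := fun c' => s c' * y c' b)
            (fun _ _ => Nat.zero_le _) (Finset.mem_univ c)
      rw [h1, mul_one]
      omega
  -- total bound in ℕ
  have htot : ∑ i ∈ Ic, w i ≤ (d - s c) * ∑ b, y c b := by
    calc ∑ i ∈ Ic, w i = ∑ i ∈ Ic, ∑ b, w i * x i b := by
          apply Finset.sum_congr rfl
          intro i _
          rw [← Finset.mul_sum, hass i, mul_one]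
      _ = ∑ b, ∑ i ∈ Ic, w i * x i b := Finset.sum_comm
      _ ≤ ∑ b, (d - s c) * y c b := Finset.sum_le_sum fun b _ => hbin b
      _ = (d - s c) * ∑ b, y c b := by rw [Finset.mul_sum]
  -- move to ℚ / ℤ
  rw [Int.ceil_le]
  have hD : (0:ℚ) < (d:ℚ) - s c := by
    have : (s c : ℚ) < d := by exact_mod_cast hsd
    linarith
  rw [div_le_iff₀ hD]
  push_cast
  have : ((∑ i ∈ Ic, w i : ℕ) : ℚ) ≤ (((d - s c) * ∑ b, y c b : ℕ) : ℚ) := by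
    exact_mod_cast htot
  push_cast [Nat.cast_sub hsd.le] at this
  linarith [this]
end

section
/- For every feasible 0-1 solution of ILP_N, Σ_{b∈B} z_b ≥ ⌈(Σ_{i∈I} w_i + Σ_{c∈C} γ_c s_c)/d⌉, where γ_c = ⌈(Σ_{i∈I_c} w_i)/(d - s_c)⌉ (the Minimum Bins Inequality). -/
/-- For every feasible 0-1 solution of ILP_N, the Minimum Bins Inequality holds:
`Σ_b z_b ≥ ⌈(Σ_i w_i + Σ_c γ_c s_c)/d⌉` where
`γ_c = ⌈(Σ_{i ∈ I_c} w_i)/(d - s_c)⌉`. -/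
theorem stmt6 (n m k d : ℕ) (cls : Fin n → Fin m) (w : Fin n → ℕ) (s : Fin m → ℕ)
    (hw : ∀ i, 0 < w i) (hd : 0 < d)
    (hws : ∀ i, w i + s (cls i) ≤ d)
    (hcls : ∀ c, ∃ i, cls i = c)
    (x : Fin n → Fin k → ℕ) (y : Fin m → Fin k → ℕ) (z : Fin k → ℕ)
    (hx01 : ∀ i b, x i b ≤ 1) (hy01 : ∀ c b, y c b ≤ 1) (hz01 : ∀ b, z b ≤ 1)
    (hass : ∀ i, ∑ b, x i b = 1)
    (hcap : ∀ b, (∑ i, w i * x i b) + ∑ c, s c * y c b ≤ d * z b)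
    (hlink : ∀ i b, x i b ≤ y (cls i) b) :
    ⌈((∑ i, (w i : ℚ)) +
        ∑ c, ((⌈(∑ i ∈ Finset.univ.filter (fun i => cls i = c), (w i : ℚ)) /
              ((d : ℚ) - s c)⌉ : ℤ) : ℚ) * s c) / (d : ℚ)⌉
      ≤ ∑ b, (z b : ℤ) := by
  have hdQ : (0:ℚ) < d := by exact_mod_cast hd
  have hsc : ∀ c, (s c : ℚ) < d := by
    intro c
    obtain ⟨i, hi⟩ := hcls c
    have h1 := hws i
    have h2 := hw i
    rw [hi] at h1
    exact_mod_cast (by omega : s c < d)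
  -- per-bin, per-class capacity bound
  have hbin : ∀ c b, (∑ i ∈ Finset.univ.filter (fun i => cls i = c), w i * x i b)
      + s c * y c b ≤ d * y c b := by
    intro c b
    rcases Nat.le_one_iff_eq_zero_or_eq_one.mp (hy01 c b) with h | h
    · rw [h]
      have hzero : ∀ i ∈ Finset.univ.filter (fun i => cls i = c), w i * x i b = 0 := by
        intro i hi
        rw [Finset.mem_filter] at hi
        have := hlink i b
        rw [hi.2, h] at this
        simp [Nat.le_zero.mp this]
      rw [Finset.sum_eq_zero hzero]
      simp
    · rw [h]
      have h1 : (∑ i ∈ Finset.univ.filter (fun i => cls i = c), w i * x i b)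
          ≤ ∑ i, w i * x i b :=
        Finset.sum_le_sum_of_subset (Finset.filter_subset _ _)
      have h2 : s c * y c b ≤ ∑ c', s c' * y c' b :=
        Finset.single_le_sum (f := fun c' => s c' * y c' b) (fun c' _ => Nat.zero_le _) (Finset.mem_univ c)
      have h3 := hcap b
      have h4 : d * z b ≤ d * 1 := Nat.mul_le_mul_left d (hz01 b)
      rw [h] at h2
      omega
  -- class totals
  have key : ∀ c, (⌈(∑ i ∈ Finset.univ.filter (fun i => cls i = c), (w i : ℚ)) /
      ((d : ℚ) - s c)⌉ : ℤ) ≤ ((∑ b, y c b : ℕ) : ℤ) := by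
    intro c
    rw [Int.ceil_le]
    rw [div_le_iff₀ (by linarith [hsc c])]
    have hnat : (∑ i ∈ Finset.univ.filter (fun i => cls i = c), w i)
        + s c * (∑ b, y c b) ≤ d * (∑ b, y c b) := by
      have hsum : ∑ b, ((∑ i ∈ Finset.univ.filter (fun i => cls i = c), w i * x i b)
          + s c * y c b) ≤ ∑ b, d * y c b :=
        Finset.sum_le_sum (fun b _ => hbin c b)
      rw [Finset.sum_add_distrib, ← Finset.mul_sum, ← Finset.mul_sum,
        Finset.sum_comm] at hsum
      calc (∑ i ∈ Finset.univ.filter (fun i => cls i = c), w i) + s c * (∑ b, y c b)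
          = (∑ i ∈ Finset.univ.filter (fun i => cls i = c), w i * ∑ b, x i b)
            + s c * (∑ b, y c b) := by
            congr 1
            refine Finset.sum_congr rfl (fun i _ => ?_)
            rw [hass i, mul_one]
        _ ≤ d * (∑ b, y c b) := by
            simpa [Finset.mul_sum] using hsum
    have : ((∑ i ∈ Finset.univ.filter (fun i => cls i = c), w i : ℕ) : ℚ)
        + (s c : ℚ) * ((∑ b, y c b : ℕ) : ℚ) ≤ (d : ℚ) * ((∑ b, y c b : ℕ) : ℚ) := by
      exact_mod_cast hnat
    push_cast at this ⊢
    nlinarith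
  rw [Int.ceil_le]
  rw [div_le_iff₀ hdQ]
  -- total capacity bound
  have hnat2 : (∑ i, w i) + (∑ c, s c * ∑ b, y c b) ≤ d * ∑ b, z b := by
    have hsum : ∑ b, ((∑ i, w i * x i b) + ∑ c, s c * y c b) ≤ ∑ b, d * z b :=
      Finset.sum_le_sum (fun b _ => hcap b)
    rw [Finset.sum_add_distrib, Finset.sum_comm, ← Finset.mul_sum] at hsum
    calc (∑ i, w i) + (∑ c, s c * ∑ b, y c b)
        = (∑ i, w i * ∑ b, x i b) + ∑ c, s c * ∑ b, y c b := by
          congr 1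
          refine Finset.sum_congr rfl (fun i _ => ?_)
          rw [hass i, mul_one]
      _ ≤ d * ∑ b, z b := by
          have : ∑ b, ∑ c, s c * y c b = ∑ c, s c * ∑ b, y c b := by
            rw [Finset.sum_comm]
            exact Finset.sum_congr rfl (fun c _ => by rw [Finset.mul_sum])
          rw [Finset.sum_comm] at hsum
          calc (∑ i, w i * ∑ b, x i b) + ∑ c, s c * ∑ b, y c b
              = (∑ i, ∑ b, w i * x i b) + ∑ b, ∑ c, s c * y c b := by
                rw [this]
                congr 1
                exact Finset.sum_congr rfl (fun i _ => by rw [Finset.mul_sum])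
            _ ≤ d * ∑ b, z b := by
                rw [Finset.sum_comm]
                simpa using hsum
  have hQ2 : ((∑ i, w i : ℕ) : ℚ) + ((∑ c, s c * ∑ b, y c b : ℕ) : ℚ)
      ≤ (d : ℚ) * ((∑ b, z b : ℕ) : ℚ) := by exact_mod_cast hnat2
  have hγs : (∑ c, ((⌈(∑ i ∈ Finset.univ.filter (fun i => cls i = c), (w i : ℚ)) /
      ((d : ℚ) - s c)⌉ : ℤ) : ℚ) * s c)
      ≤ ∑ c, ((∑ b, y c b : ℕ) : ℚ) * s c := by
    refine Finset.sum_le_sum (fun c _ => ?_)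
    have := key c
    have h2 : ((⌈(∑ i ∈ Finset.univ.filter (fun i => cls i = c), (w i : ℚ)) /
        ((d : ℚ) - s c)⌉ : ℤ) : ℚ) ≤ ((∑ b, y c b : ℕ) : ℚ) := by exact_mod_cast this
    have h3 : (0:ℚ) ≤ s c := by positivity
    nlinarith
  push_cast at hQ2 hγs ⊢
  have hcomm : ∑ c, ((∑ b, (y c b : ℚ))) * (s c : ℚ) = ∑ c, (s c : ℚ) * ∑ b, (y c b : ℚ) := by
    exact Finset.sum_congr rfl (fun c _ => mul_comm _ _)
  rw [hcomm] at hγs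
  nlinarith [hγs, hQ2]
end

section
/- The LP relaxation LP_N^† (LP_N augmented with the Minimum Classes Inequalities Σ_b y_{cb} ≥ γ_c for each class c) has optimal value (r/d)(Σ_{i∈I} w_i + Σ_{c∈C} γ_c s_c) + Σ_{c∈C} γ_c f_c, attained by x_{ib} = 1/k, y_{cb} = γ_c/k, z_b = (Σ_i w_i + Σ_c γ_c s_c)/(k d). -/
/-- `γ_c = ⌈(Σ_{i ∈ I_c} w_i)/(d - s_c)⌉`. -/
def gammaC (n m : ℕ) (cls : Fin n → Fin m) (w : Fin n → ℕ) (s : Fin m → ℕ) (d : ℕ)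
    (c : Fin m) : ℤ :=
  ⌈(∑ i ∈ Finset.univ.filter (fun i => cls i = c), (w i : ℚ)) / ((d : ℚ) - s c)⌉

/-- Feasibility for LP_N^† : LP_N together with the Minimum Classes Inequalities. -/
def LPFeasibleMCI (n m k : ℕ) (cls : Fin n → Fin m) (w : Fin n → ℕ) (s : Fin m → ℕ) (d : ℕ)
    (x : Fin n → Fin k → ℚ) (y : Fin m → Fin k → ℚ) (z : Fin k → ℚ) : Prop :=
  (∀ i b, 0 ≤ x i b ∧ x i b ≤ 1) ∧
  (∀ c b, 0 ≤ y c b ∧ y c b ≤ 1) ∧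
  (∀ b, 0 ≤ z b ∧ z b ≤ 1) ∧
  (∀ i, ∑ b, x i b = 1) ∧
  (∀ b, (∑ i, (w i : ℚ) * x i b) + ∑ c, (s c : ℚ) * y c b ≤ (d : ℚ) * z b) ∧
  (∀ i b, x i b ≤ y (cls i) b) ∧
  (∀ c, ((gammaC n m cls w s d c : ℤ) : ℚ) ≤ ∑ b, y c b)

/-- The optimal value of LP_N^† equals `(r/d)(Σ w_i + Σ γ_c s_c) + Σ γ_c f_c`,
attained by `x_{ib} = 1/k`, `y_{cb} = γ_c/k`, `z_b = (Σ w_i + Σ γ_c s_c)/(k d)`. -/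
theorem stmt7 (n m k d r : ℕ) (cls : Fin n → Fin m) (w : Fin n → ℕ) (s f : Fin m → ℕ)
    (hw : ∀ i, 0 < w i) (hd : 0 < d) (hr : 0 < r) (hk : 1 ≤ k)
    (hcls : ∀ c, ∃ i, cls i = c)
    (hws : ∀ i, w i + s (cls i) ≤ d)
    (hγk : ∀ c, gammaC n m cls w s d c ≤ (k : ℤ))
    (hfeas : (∑ i, (w i : ℚ)) + ∑ c, ((gammaC n m cls w s d c : ℤ) : ℚ) * s c ≤ (k : ℚ) * d) :
    IsLeast {v : ℚ | ∃ x y z, LPFeasibleMCI n m k cls w s d x y z ∧ LPObj m k r f y z = v}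
        ((r : ℚ) / d * ((∑ i, (w i : ℚ)) + ∑ c, ((gammaC n m cls w s d c : ℤ) : ℚ) * s c)
          + ∑ c, ((gammaC n m cls w s d c : ℤ) : ℚ) * f c) ∧
      LPFeasibleMCI n m k cls w s d (fun _ _ => 1 / k)
        (fun c _ => ((gammaC n m cls w s d c : ℤ) : ℚ) / k)
        (fun _ => ((∑ i, (w i : ℚ)) + ∑ c, ((gammaC n m cls w s d c : ℤ) : ℚ) * s c) / (k * d)) ∧
      LPObj m k r f (fun c _ => ((gammaC n m cls w s d c : ℤ) : ℚ) / k)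
        (fun _ => ((∑ i, (w i : ℚ)) + ∑ c, ((gammaC n m cls w s d c : ℤ) : ℚ) * s c) / (k * d))
        = (r : ℚ) / d * ((∑ i, (w i : ℚ)) + ∑ c, ((gammaC n m cls w s d c : ℤ) : ℚ) * s c)
          + ∑ c, ((gammaC n m cls w s d c : ℤ) : ℚ) * f c := by

  have hk0 : (0:ℚ) < k := by exact_mod_cast hk
  have hd0 : (0:ℚ) < d := by exact_mod_cast hd
  set γ : Fin m → ℚ := fun c => ((gammaC n m cls w s d c : ℤ) : ℚ) with hγdef
  have hγ1 : ∀ c, (1:ℚ) ≤ γ c := by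
    intro c
    obtain ⟨i0, hi0⟩ := hcls c
    have hsc : (s c : ℚ) < d := by
      have := hws i0
      have hwi := hw i0
      rw [hi0] at this
      exact_mod_cast Nat.lt_of_lt_of_le (Nat.lt_add_of_pos_left hwi) this
    have hpos : 0 < (∑ i ∈ Finset.univ.filter (fun i => cls i = c), (w i : ℚ)) / ((d : ℚ) - s c) := by
      apply div_pos
      · apply Finset.sum_pos
        · intro i _; exact_mod_cast hw i
        · exact ⟨i0, Finset.mem_filter.2 ⟨Finset.mem_univ _, hi0⟩⟩
      · linarith
    have : (0:ℤ) < gammaC n m cls w s d c := by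
      rw [gammaC, Int.lt_ceil]; exact_mod_cast hpos
    simp only [hγdef]
    exact_mod_cast this
  have hγk' : ∀ c, γ c ≤ k := by intro c; simp only [hγdef]; exact_mod_cast hγk c
  set W : ℚ := (∑ i, (w i : ℚ)) + ∑ c, γ c * s c with hWdef
  have hW0 : 0 ≤ W := by
    apply add_nonneg
    · exact Finset.sum_nonneg fun i _ => by positivity
    · exact Finset.sum_nonneg fun c _ => mul_nonneg (le_trans zero_le_one (hγ1 c)) (by positivity)
  have hfea : LPFeasibleMCI n m k cls w s d (fun _ _ => 1 / k)
      (fun c _ => γ c / k) (fun _ => W / (k * d)) := by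
    refine ⟨fun i b => ⟨by positivity, ?_⟩, fun c b => ⟨?_, ?_⟩, fun b => ⟨by positivity, ?_⟩,
      fun i => ?_, fun b => ?_, fun i b => ?_, fun c => ?_⟩
    · rw [div_le_one hk0]; exact_mod_cast hk
    · exact div_nonneg (le_trans zero_le_one (hγ1 c)) hk0.le
    · rw [div_le_one hk0]; exact hγk' c
    · rw [div_le_one (by positivity)]; exact hfeas
    · simp [Finset.sum_const, Finset.card_univ]
      field_simp
    · have e1 : (∑ i, (w i:ℚ) * (1/k)) = (∑ i, (w i:ℚ)) / k := by
        rw [Finset.sum_div]; exact Finset.sum_congr rfl fun i _ => by ring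
      have e2 : (∑ c, (s c:ℚ) * (γ c / k)) = (∑ c, γ c * s c) / k := by
        rw [Finset.sum_div]; exact Finset.sum_congr rfl fun c _ => by ring
      rw [e1, e2, ← add_div]
      apply le_of_eq
      field_simp
      rw [hWdef]
    · show (1:ℚ)/k ≤ γ (cls i)/k
      gcongr
      exact hγ1 _
    · apply le_of_eq
      simp [Finset.sum_const, Finset.card_univ]
      field_simp
      rfl
  have hobj : LPObj m k r f (fun c _ => γ c / k) (fun _ => W / (k * d))
      = (r:ℚ)/d * W + ∑ c, γ c * f c := by
    have e3 : (∑ c, (f c:ℚ) * (γ c / k)) = (∑ c, γ c * f c) / k := by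
      rw [Finset.sum_div]; exact Finset.sum_congr rfl fun c _ => by ring
    rw [LPObj]
    simp only [e3, Finset.sum_const, Finset.card_univ, Fintype.card_fin, nsmul_eq_mul]
    field_simp
  refine ⟨⟨⟨_, _, _, hfea, hobj⟩, ?_⟩, hfea, hobj⟩
  rintro v ⟨x, y, z, ⟨hx, hy, hz, hassign, hcap, hlink, hmci⟩, rfl⟩
  have e4 : ∑ b, ∑ i, (w i:ℚ) * x i b = ∑ i, (w i:ℚ) := by
    rw [Finset.sum_comm]
    simp [← Finset.mul_sum, hassign]
  have e5 : ∑ b, ∑ c, (s c:ℚ) * y c b = ∑ c, (s c:ℚ) * ∑ b, y c b := by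
    rw [Finset.sum_comm]
    exact Finset.sum_congr rfl fun c _ => by rw [Finset.mul_sum]
  have hsum : (∑ i, (w i:ℚ)) + ∑ c, (s c:ℚ) * ∑ b, y c b ≤ (d:ℚ) * ∑ b, z b := by
    calc (∑ i, (w i:ℚ)) + ∑ c, (s c:ℚ) * ∑ b, y c b
        = ∑ b, ((∑ i, (w i:ℚ) * x i b) + ∑ c, (s c:ℚ) * y c b) := by
          rw [Finset.sum_add_distrib, e4, e5]
      _ ≤ ∑ b, (d:ℚ) * z b := Finset.sum_le_sum fun b _ => hcap b
      _ = (d:ℚ) * ∑ b, z b := by rw [Finset.mul_sum]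
  have eobj : LPObj m k r f y z = (r:ℚ) * ∑ b, z b + ∑ c, (f c:ℚ) * ∑ b, y c b := by
    rw [LPObj, Finset.sum_add_distrib, ← Finset.mul_sum, Finset.sum_comm]
    congr 1
    exact Finset.sum_congr rfl fun c _ => by rw [Finset.mul_sum]
  rw [eobj]
  have h1 : ∑ c, γ c * s c ≤ ∑ c, (s c:ℚ) * ∑ b, y c b :=
    Finset.sum_le_sum fun c _ => by
      rw [mul_comm]
      exact mul_le_mul_of_nonneg_left (hmci c) (by positivity)
  have h2 : ∑ c, γ c * f c ≤ ∑ c, (f c:ℚ) * ∑ b, y c b :=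
    Finset.sum_le_sum fun c _ => by
      rw [mul_comm]
      exact mul_le_mul_of_nonneg_left (hmci c) (by positivity)
  have hrd : (0:ℚ) ≤ (r:ℚ)/d := by positivity
  calc (r:ℚ)/d * W + ∑ c, γ c * f c
      ≤ (r:ℚ)/d * ((∑ i, (w i:ℚ)) + ∑ c, (s c:ℚ) * ∑ b, y c b) + ∑ c, (f c:ℚ) * ∑ b, y c b := by
        apply add_le_add _ h2
        exact mul_le_mul_of_nonneg_left (by rw [hWdef] at *; exact add_le_add_right h1 _) hrd
    _ ≤ (r:ℚ)/d * ((d:ℚ) * ∑ b, z b) + ∑ c, (f c:ℚ) * ∑ b, y c b := by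
        apply add_le_add_left
        exact mul_le_mul_of_nonneg_left hsum hrd
    _ = (r:ℚ) * ∑ b, z b + ∑ c, (f c:ℚ) * ∑ b, y c b := by
        congr 1
        field_simp
end

section
/- For the family of single-class BPPS instances parameterized by n ≥ 2 with m = 1, unit item weights w_i = 1, setup weight s_1 = n - 1, capacity d = n, k = n bins, bin cost r > 0 and setup cost f_1 ≥ 0: the optimal BPPS value is ψ = n(r + f_1), the LP_N optimal value is 2r + f_1 - r/n, and the ratio ζ(LP_N)/ψ tends to 0 as n → ∞. -/
/-- Feasibility for the single-class BPPS instance family with `n` items of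
weight 1, setup weight `n - 1`, capacity `d = n`: each used bin's item
weight plus the setup weight is at most `n`. -/
def Feas8 (n B : ℕ) (a : Fin n → Fin B) : Prop :=
  ∀ b : Fin B, (∃ i, a i = b) →
    (Finset.univ.filter (fun i => a i = b)).card + (n - 1) ≤ n

/-- Cost of a solution: bin cost `r` plus setup cost `f1` for each used bin
(the single class is active in every used bin). -/
def Cost8 (r f1 : ℚ) (n B : ℕ) (a : Fin n → Fin B) : ℚ :=
  ((Finset.univ.filter (fun b : Fin B => ∃ i, a i = b)).card : ℚ) * (r + f1)

/-- For the family of single-class BPPS instances with unit weights, setup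
weight `n - 1` and capacity `n`: the optimal BPPS value is `n (r + f1)`, the
LP_N value `(r/n)(Σ w_i + s_1) + f_1` equals `2r + f1 - r/n`, and the ratio
`ζ(LP_N)/ψ` tends to `0` as `n → ∞`. -/
theorem stmt8 (r f1 : ℚ) (hr : 0 < r) (hf : 0 ≤ f1) :
    (∀ n : ℕ, 2 ≤ n →
      IsLeast {v : ℚ | ∃ (B : ℕ) (a : Fin n → Fin B), Feas8 n B a ∧ Cost8 r f1 n B a = v}
        ((n : ℚ) * (r + f1)) ∧
      r / (n : ℚ) * ((n : ℚ) + ((n - 1 : ℕ) : ℚ)) + f1 = 2 * r + f1 - r / n) ∧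
    Filter.Tendsto
      (fun n : ℕ =>
        (r / (n : ℚ) * ((n : ℚ) + ((n - 1 : ℕ) : ℚ)) + f1) / ((n : ℚ) * (r + f1)))
      Filter.atTop (nhds 0) := by
  have hrf : (0 : ℚ) < r + f1 := by linarith
  constructor
  · intro n hn
    constructor
    · constructor
      · -- membership: B = n, a = id
        refine ⟨n, id, ?_, ?_⟩
        · intro b _
          have : (Finset.univ.filter (fun i : Fin n => id i = b)).card = 1 := by
            simp [Finset.filter_eq']
          rw [this]
          omega
        · have h1 : (Finset.univ.filter (fun b : Fin n => ∃ i, id i = b)) = Finset.univ := by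
            ext b; simp
          simp [Cost8, h1]
      · -- lower bound
        rintro v ⟨B, a, hfeas, rfl⟩
        set U := Finset.univ.filter (fun b : Fin B => ∃ i, a i = b) with hU
        have hinj : Function.Injective a := by
          intro i j hij
          by_contra hne
          have hb := hfeas (a i) ⟨i, rfl⟩
          have h2 : 2 ≤ (Finset.univ.filter (fun k => a k = a i)).card := by
            have : ({i, j} : Finset (Fin n)) ⊆ Finset.univ.filter (fun k => a k = a i) := by
              intro x hx
              simp only [Finset.mem_insert, Finset.mem_singleton] at hx
              rcases hx with rfl | rfl <;> simp [hij]
            calc 2 = ({i, j} : Finset (Fin n)).card := by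
                    rw [Finset.card_insert_of_notMem (by simpa using hne)]; simp
              _ ≤ _ := Finset.card_le_card this
          omega
        have hcard : n ≤ U.card := by
          have : (Finset.univ : Finset (Fin n)).card ≤ U.card := by
            apply Finset.card_le_card_of_injOn a
            · intro i _; simp [hU]
            · exact fun i _ j _ h => hinj h
          simpa using this
        unfold Cost8
        rw [← hU]
        have : (n : ℚ) ≤ (U.card : ℚ) := by exact_mod_cast hcard
        nlinarith
    · have hn0 : (n : ℚ) ≠ 0 := by positivity
      have h1 : ((n - 1 : ℕ) : ℚ) = (n : ℚ) - 1 := by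
        have : 1 ≤ n := by omega
        push_cast [this]; ring
      rw [h1]; field_simp; ring
  · -- tendsto
    have hnum : Filter.Tendsto (fun n : ℕ =>
        r / (n : ℚ) * ((n : ℚ) + ((n - 1 : ℕ) : ℚ)) + f1) Filter.atTop (nhds (2 * r + f1)) := by
      have hev : ∀ᶠ n : ℕ in Filter.atTop,
          2 * r + f1 - r / (n : ℚ) = r / (n : ℚ) * ((n : ℚ) + ((n - 1 : ℕ) : ℚ)) + f1 := by
        filter_upwards [Filter.eventually_ge_atTop 2] with n hn
        have hn0 : (n : ℚ) ≠ 0 := by positivity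
        have h1 : ((n - 1 : ℕ) : ℚ) = (n : ℚ) - 1 := by
          have : 1 ≤ n := by omega
          push_cast [this]; ring
        rw [h1]; field_simp; ring
      refine Filter.Tendsto.congr' hev ?_
      have hdiv : Filter.Tendsto (fun n : ℕ => r / (n : ℚ)) Filter.atTop (nhds 0) :=
        Filter.Tendsto.div_atTop tendsto_const_nhds tendsto_natCast_atTop_atTop
      have := (tendsto_const_nhds (x := 2 * r + f1) (f := Filter.atTop (α := ℕ))).sub hdiv
      simpa using this
    have hden : Filter.Tendsto (fun n : ℕ => (n : ℚ) * (r + f1)) Filter.atTop Filter.atTop :=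
      Filter.Tendsto.atTop_mul_const hrf tendsto_natCast_atTop_atTop
    exact Filter.Tendsto.div_atTop hnum hden
end

section
/- The LP relaxation LP_N^‡ (LP_N with both the Minimum Classes Inequalities and the Minimum Bins Inequality Σ_b z_b ≥ k̲) has optimal value r·k̲ + Σ_{c∈C} γ_c f_c, where k̲ = ⌈(Σ_{i∈I} w_i + Σ_{c∈C} γ_c s_c)/d⌉, attained by x_{ib} = 1/k, y_{cb} = γ_c/k, z_b = k̲/k. -/
/-- `k̲ = ⌈(Σ_i w_i + Σ_c γ_c s_c)/d⌉`. -/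
def kLow (n m : ℕ) (cls : Fin n → Fin m) (w : Fin n → ℕ) (s : Fin m → ℕ) (d : ℕ) : ℤ :=
  ⌈((∑ i, (w i : ℚ)) + ∑ c, ((gammaC n m cls w s d c : ℤ) : ℚ) * s c) / (d : ℚ)⌉

/-- Feasibility for LP_N^‡ : LP_N with the MCIs and the MBI. -/
def LPFeasibleMM (n m k : ℕ) (cls : Fin n → Fin m) (w : Fin n → ℕ) (s : Fin m → ℕ) (d : ℕ)
    (x : Fin n → Fin k → ℚ) (y : Fin m → Fin k → ℚ) (z : Fin k → ℚ) : Prop :=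
  (∀ i b, 0 ≤ x i b ∧ x i b ≤ 1) ∧
  (∀ c b, 0 ≤ y c b ∧ y c b ≤ 1) ∧
  (∀ b, 0 ≤ z b ∧ z b ≤ 1) ∧
  (∀ i, ∑ b, x i b = 1) ∧
  (∀ b, (∑ i, (w i : ℚ) * x i b) + ∑ c, (s c : ℚ) * y c b ≤ (d : ℚ) * z b) ∧
  (∀ i b, x i b ≤ y (cls i) b) ∧
  (∀ c, ((gammaC n m cls w s d c : ℤ) : ℚ) ≤ ∑ b, y c b) ∧
  ((kLow n m cls w s d : ℤ) : ℚ) ≤ ∑ b, z b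

/-- The optimal value of LP_N^‡ equals `r k̲ + Σ γ_c f_c`, attained by
`x_{ib} = 1/k`, `y_{cb} = γ_c/k`, `z_b = k̲/k`. -/
theorem stmt13 (n m k d r : ℕ) (cls : Fin n → Fin m) (w : Fin n → ℕ) (s f : Fin m → ℕ)
    (hw : ∀ i, 0 < w i) (hd : 0 < d) (hr : 0 < r) (hk : 1 ≤ k)
    (hcls : ∀ c, ∃ i, cls i = c)
    (hws : ∀ i, w i + s (cls i) ≤ d)
    (hγk : ∀ c, gammaC n m cls w s d c ≤ (k : ℤ))
    (hkk : kLow n m cls w s d ≤ (k : ℤ)) :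
    IsLeast {v : ℚ | ∃ x y z, LPFeasibleMM n m k cls w s d x y z ∧ LPObj m k r f y z = v}
        ((r : ℚ) * ((kLow n m cls w s d : ℤ) : ℚ)
          + ∑ c, ((gammaC n m cls w s d c : ℤ) : ℚ) * f c) ∧
      LPFeasibleMM n m k cls w s d (fun _ _ => 1 / k)
        (fun c _ => ((gammaC n m cls w s d c : ℤ) : ℚ) / k)
        (fun _ => ((kLow n m cls w s d : ℤ) : ℚ) / k) ∧
      LPObj m k r f (fun c _ => ((gammaC n m cls w s d c : ℤ) : ℚ) / k)
        (fun _ => ((kLow n m cls w s d : ℤ) : ℚ) / k)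
        = (r : ℚ) * ((kLow n m cls w s d : ℤ) : ℚ)
          + ∑ c, ((gammaC n m cls w s d c : ℤ) : ℚ) * f c := by
  have hK : (0:ℚ) < k := by exact_mod_cast hk
  have hK0 : (k:ℚ) ≠ 0 := ne_of_gt hK
  have hdQ : (0:ℚ) < d := by exact_mod_cast hd
  -- γ ≥ 1
  have hγ1 : ∀ c, (1:ℤ) ≤ gammaC n m cls w s d c := by
    intro c
    obtain ⟨i, hi⟩ := hcls c
    have hsd : (s c : ℚ) < d := by
      have h1 := hws i
      have h2 := hw i
      rw [hi] at h1
      exact_mod_cast lt_of_lt_of_le (by omega : s c < w i + s c) (by exact_mod_cast h1)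
    have hpos : 0 < (∑ j ∈ Finset.univ.filter (fun j => cls j = c), (w j : ℚ)) /
        ((d : ℚ) - s c) := by
      apply div_pos
      · apply Finset.sum_pos'
        · intro j _; positivity
        · exact ⟨i, by simp [hi], by exact_mod_cast hw i⟩
      · linarith
    have := Int.ceil_pos.mpr hpos
    unfold gammaC
    omega
  have hγ0 : ∀ c, (0:ℚ) ≤ ((gammaC n m cls w s d c : ℤ) : ℚ) := by
    intro c; exact_mod_cast le_trans (by norm_num) (hγ1 c)
  -- kl ≥ 0
  have hnum0 : (0:ℚ) ≤ (∑ i, (w i : ℚ)) + ∑ c, ((gammaC n m cls w s d c : ℤ) : ℚ) * s c := by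
    apply add_nonneg
    · positivity
    · apply Finset.sum_nonneg; intro c _
      exact mul_nonneg (hγ0 c) (by positivity)
  have hkl0 : (0:ℤ) ≤ kLow n m cls w s d := by
    apply Int.ceil_nonneg
    positivity
  have hkl0Q : (0:ℚ) ≤ ((kLow n m cls w s d : ℤ) : ℚ) := by exact_mod_cast hkl0
  -- capacity key inequality
  have hcapkey : (∑ i, (w i : ℚ)) + ∑ c, ((gammaC n m cls w s d c : ℤ) : ℚ) * s c
      ≤ (d : ℚ) * ((kLow n m cls w s d : ℤ) : ℚ) := by
    have h := Int.le_ceil (((∑ i, (w i : ℚ)) +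
      ∑ c, ((gammaC n m cls w s d c : ℤ) : ℚ) * s c) / (d : ℚ))
    rw [div_le_iff₀ hdQ] at h
    calc _ ≤ ((kLow n m cls w s d : ℤ) : ℚ) * d := h
    _ = _ := mul_comm _ _
  -- feasibility of the uniform solution
  have hfeas : LPFeasibleMM n m k cls w s d (fun _ _ => 1 / k)
      (fun c _ => ((gammaC n m cls w s d c : ℤ) : ℚ) / k)
      (fun _ => ((kLow n m cls w s d : ℤ) : ℚ) / k) := by
    refine ⟨?_, ?_, ?_, ?_, ?_, ?_, ?_, ?_⟩
    · intro i b; constructor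
      · positivity
      · rw [div_le_one hK]; exact_mod_cast hk
    · intro c b; constructor
      · exact div_nonneg (hγ0 c) hK.le
      · rw [div_le_one hK]; exact_mod_cast hγk c
    · intro b; constructor
      · exact div_nonneg hkl0Q hK.le
      · rw [div_le_one hK]; exact_mod_cast hkk
    · intro i
      rw [Finset.sum_const, Finset.card_univ, Fintype.card_fin, nsmul_eq_mul]
      field_simp
    · intro b
      have e1 : (∑ i, (w i : ℚ) * (1 / k)) = (∑ i, (w i : ℚ)) / k := by
        rw [Finset.sum_div]; exact Finset.sum_congr rfl fun i _ => by ring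
      have e2 : (∑ c, (s c : ℚ) * (((gammaC n m cls w s d c : ℤ) : ℚ) / k))
          = (∑ c, ((gammaC n m cls w s d c : ℤ) : ℚ) * s c) / k := by
        rw [Finset.sum_div]; exact Finset.sum_congr rfl fun c _ => by ring
      rw [e1, e2, ← add_div]
      show _ ≤ (d : ℚ) * (((kLow n m cls w s d : ℤ) : ℚ) / k)
      rw [← mul_div_assoc, div_le_div_iff_of_pos_right hK]
      exact hcapkey
    · intro i b
      rw [div_le_div_iff_of_pos_right hK]
      exact_mod_cast hγ1 (cls i)
    · intro c
      rw [Finset.sum_const, Finset.card_univ, Fintype.card_fin, nsmul_eq_mul]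
      rw [mul_div_cancel₀ _ hK0]
    · rw [Finset.sum_const, Finset.card_univ, Fintype.card_fin, nsmul_eq_mul]
      rw [mul_div_cancel₀ _ hK0]
  -- objective value of the uniform solution
  have hobjval : LPObj m k r f (fun c _ => ((gammaC n m cls w s d c : ℤ) : ℚ) / k)
      (fun _ => ((kLow n m cls w s d : ℤ) : ℚ) / k)
      = (r : ℚ) * ((kLow n m cls w s d : ℤ) : ℚ)
        + ∑ c, ((gammaC n m cls w s d c : ℤ) : ℚ) * f c := by
    unfold LPObj
    rw [Finset.sum_const, Finset.card_univ, Fintype.card_fin, nsmul_eq_mul]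
    have e : (∑ c, (f c : ℚ) * (((gammaC n m cls w s d c : ℤ) : ℚ) / k))
        = (∑ c, ((gammaC n m cls w s d c : ℤ) : ℚ) * f c) / k := by
      rw [Finset.sum_div]; exact Finset.sum_congr rfl fun c _ => by ring
    rw [e]
    field_simp
  refine ⟨⟨⟨_, _, _, hfeas, hobjval⟩, ?_⟩, hfeas, hobjval⟩
  rintro v ⟨x, y, z, ⟨hx, hy, hz, hx1, hcap, hxy, hmci, hmbi⟩, rfl⟩
  have e : LPObj m k r f y z = (r : ℚ) * (∑ b, z b) + ∑ c, (f c : ℚ) * ∑ b, y c b := by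
    unfold LPObj
    rw [Finset.sum_add_distrib, ← Finset.mul_sum, Finset.sum_comm]
    congr 1
    exact Finset.sum_congr rfl fun c _ => (Finset.mul_sum _ _ _).symm
  rw [e]
  apply add_le_add
  · exact mul_le_mul_of_nonneg_left hmbi (by positivity)
  · apply Finset.sum_le_sum
    intro c _
    rw [mul_comm]
    exact mul_le_mul_of_nonneg_left (hmci c) (by positivity)
end

section
/- For every BPPS instance, the number of bins used in any optimal BPPS solution is at most Σ_{c∈C} β_c, where β_c is the minimum number of bins of capacity d − s_c needed to pack the items of class c. -/
/-- BPPS feasibility. -/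
def BPPSFeas (n m B d : ℕ) (cls : Fin n → Fin m) (w : Fin n → ℕ) (s : Fin m → ℕ)
    (a : Fin n → Fin B) : Prop :=
  ∀ b : Fin B,
    (∑ i ∈ Finset.univ.filter (fun i => a i = b), w i) +
      (∑ c ∈ Finset.univ.filter (fun c => ∃ i, cls i = c ∧ a i = b), s c) ≤ d

/-- BPPS cost. -/
def BPPSCost (n m B r : ℕ) (cls : Fin n → Fin m) (f : Fin m → ℕ)
    (a : Fin n → Fin B) : ℕ :=
  ∑ b ∈ Finset.univ.filter (fun b : Fin B => ∃ i, a i = b),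
    (r + ∑ c ∈ Finset.univ.filter (fun c => ∃ i, cls i = c ∧ a i = b), f c)

/-- A packing of the items of class `c` into `k` bins of capacity `cap`. -/
def ClassPack (n m : ℕ) (cls : Fin n → Fin m) (w : Fin n → ℕ) (cap : ℕ) (c : Fin m)
    (k : ℕ) : Prop :=
  ∃ a : {i : Fin n // cls i = c} → Fin k,
    ∀ b : Fin k,
      ∑ i ∈ Finset.univ.filter (fun i : {i : Fin n // cls i = c} => a i = b), w i.1 ≤ cap

/-- The number of bins used in any optimal BPPS solution is at most
`Σ_c β_c`, where `β_c` is the minimum number of bins of capacity `d - s_c`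
needed to pack the items of class `c`. -/
theorem stmt14 (n m d r : ℕ) (cls : Fin n → Fin m) (w : Fin n → ℕ) (s f : Fin m → ℕ)
    (hw : ∀ i, 0 < w i) (hd : 0 < d) (hr : 0 < r)
    (hws : ∀ i, w i + s (cls i) ≤ d)
    (βc : Fin m → ℕ)
    (hβ : ∀ c, IsLeast {k | ClassPack n m cls w (d - s c) c k} (βc c))
    (ψ B : ℕ) (a : Fin n → Fin B)
    (ha : BPPSFeas n m B d cls w s a)
    (hcost : BPPSCost n m B r cls f a = ψ)
    (hopt : IsLeast {v : ℕ | ∃ (B' : ℕ) (a' : Fin n → Fin B'),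
        BPPSFeas n m B' d cls w s a' ∧ BPPSCost n m B' r cls f a' = v} ψ) :
    (Finset.univ.filter (fun b : Fin B => ∃ i, a i = b)).card ≤ ∑ c, βc c := by
  classical
  -- Step A: βc c ≤ number of bins in which class c is active
  have hβn : ∀ c : Fin m,
      βc c ≤ (Finset.univ.filter (fun b : Fin B => ∃ i, cls i = c ∧ a i = b)).card := by
    intro c
    apply (hβ c).2
    set S := Finset.univ.filter (fun b : Fin B => ∃ i, cls i = c ∧ a i = b) with hS
    have hmem : ∀ i : {i : Fin n // cls i = c}, a i.1 ∈ S := by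
      intro i
      simp only [hS, Finset.mem_filter, Finset.mem_univ, true_and]
      exact ⟨i.1, i.2, rfl⟩
    refine ⟨fun i => S.equivFin ⟨a i.1, hmem i⟩, ?_⟩
    intro b
    set β0 : Fin B := (S.equivFin.symm b).1 with hβ0
    have hβ0S : β0 ∈ S := (S.equivFin.symm b).2
    have h1 : (∑ i ∈ Finset.univ.filter (fun i => a i = β0), w i) + s c ≤ d := by
      have h2 := ha β0
      have hcs : c ∈ Finset.univ.filter (fun c' => ∃ i, cls i = c' ∧ a i = β0) := by
        simp only [hS, Finset.mem_filter, Finset.mem_univ, true_and] at hβ0S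
        simp only [Finset.mem_filter, Finset.mem_univ, true_and]
        exact hβ0S
      have h3 := Finset.single_le_sum (f := s) (fun _ _ => Nat.zero_le _) hcs
      omega
    have himg : (Finset.univ.filter
          (fun x : {i : Fin n // cls i = c} => S.equivFin ⟨a x.1, hmem x⟩ = b)).image
          Subtype.val ⊆ Finset.univ.filter (fun i => a i = β0) := by
      intro i hi
      simp only [Finset.mem_image, Finset.mem_filter, Finset.mem_univ, true_and] at hi ⊢
      obtain ⟨x, hx, rfl⟩ := hi
      have h4 : (⟨a x.1, hmem x⟩ : {y // y ∈ S}) = S.equivFin.symm b := by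
        rw [← hx]; simp
      simpa [hβ0] using congrArg Subtype.val h4
    calc ∑ x ∈ Finset.univ.filter
            (fun x : {i : Fin n // cls i = c} => S.equivFin ⟨a x.1, hmem x⟩ = b), w x.1
        = ∑ i ∈ (Finset.univ.filter
            (fun x : {i : Fin n // cls i = c} => S.equivFin ⟨a x.1, hmem x⟩ = b)).image
            Subtype.val, w i := by
          rw [Finset.sum_image]
          intro x _ y _ h; exact Subtype.val_injective h
      _ ≤ ∑ i ∈ Finset.univ.filter (fun i => a i = β0), w i :=
          Finset.sum_le_sum_of_subset himg
      _ ≤ d - s c := by omega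
  -- Step B: the constructed class-separated solution
  choose p hp using fun c => (hβ c).1
  have e2 : (Σ c : Fin m, Fin (βc c)) ≃ Fin (∑ c, βc c) :=
    Fintype.equivFinOfCardEq (by simp)
  set a' : Fin n → Fin (∑ c, βc c) := fun i => e2 ⟨cls i, p (cls i) ⟨i, rfl⟩⟩ with ha'
  have hsig : ∀ (i : Fin n) (c : Fin m) (h : cls i = c),
      (⟨cls i, p (cls i) ⟨i, rfl⟩⟩ : Σ c, Fin (βc c)) = ⟨c, p c ⟨i, h⟩⟩ := by
    intro i c h; subst h; rfl
  have hcls : ∀ (b : Fin (∑ c, βc c)) (i : Fin n), a' i = b → cls i = (e2.symm b).1 := by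
    intro b i hib
    have : (⟨cls i, p (cls i) ⟨i, rfl⟩⟩ : Σ c, Fin (βc c)) = e2.symm b := by
      rw [← hib]; simp [ha']
    exact congrArg Sigma.fst this
  have hiff : ∀ (b : Fin (∑ c, βc c)) (i : Fin n) (h : cls i = (e2.symm b).1),
      (a' i = b ↔ p (e2.symm b).1 ⟨i, h⟩ = (e2.symm b).2) := by
    intro b i h
    rw [ha']
    simp only []
    rw [hsig i _ h]
    constructor
    · intro he
      have h5 : (⟨(e2.symm b).1, p (e2.symm b).1 ⟨i, h⟩⟩ : Σ c, Fin (βc c)) = e2.symm b :=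
        e2.injective (by rw [Equiv.apply_symm_apply]; exact he)
      exact eq_of_heq (Sigma.ext_iff.1 h5).2
    · intro he
      rw [he, Sigma.eta]
      exact e2.apply_symm_apply b
  -- weight in each bin of a'
  have hwbin : ∀ b : Fin (∑ c, βc c),
      (∑ i ∈ Finset.univ.filter (fun i => a' i = b), w i) ≤ d - s (e2.symm b).1 := by
    intro b
    set c := (e2.symm b).1 with hc
    set k := (e2.symm b).2 with hk
    have heq : Finset.univ.filter (fun i => a' i = b)
        = (Finset.univ.filter (fun x : {i : Fin n // cls i = c} => p c x = k)).image
          Subtype.val := by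
      ext i
      simp only [Finset.mem_image, Finset.mem_filter, Finset.mem_univ, true_and]
      constructor
      · intro hib
        have h := hcls b i hib
        exact ⟨⟨i, h⟩, (hiff b i h).1 hib, rfl⟩
      · rintro ⟨⟨j, hj⟩, hx, rfl⟩
        exact (hiff b j hj).2 hx
    rw [heq, Finset.sum_image (fun x _ y _ h => Subtype.val_injective h)]
    exact hp c k
  -- setup classes in each bin of a'
  have hsetup : ∀ b : Fin (∑ c, βc c),
      Finset.univ.filter (fun c' => ∃ i, cls i = c' ∧ a' i = b) ⊆ {(e2.symm b).1} := by
    intro b c' hc'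
    simp only [Finset.mem_filter, Finset.mem_univ, true_and] at hc'
    obtain ⟨i, hic, hib⟩ := hc'
    simp only [Finset.mem_singleton]
    rw [← hic]; exact hcls b i hib
  -- feasibility of a'
  have hfeas : BPPSFeas n m (∑ c, βc c) d cls w s a' := by
    intro b
    by_cases hne : ∃ i, a' i = b
    · obtain ⟨i0, hi0⟩ := hne
      have hscd : s (e2.symm b).1 ≤ d := by
        have := hws i0
        rw [hcls b i0 hi0] at this
        omega
      have h1 := hwbin b
      have h2 : (∑ c' ∈ Finset.univ.filter (fun c' => ∃ i, cls i = c' ∧ a' i = b), s c')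
          ≤ s (e2.symm b).1 := by
        calc _ ≤ ∑ c' ∈ {(e2.symm b).1}, s c' :=
              Finset.sum_le_sum_of_subset (hsetup b)
          _ = s (e2.symm b).1 := Finset.sum_singleton _ _
      omega
    · have h1 : Finset.univ.filter (fun i => a' i = b) = ∅ := by
        rw [Finset.filter_eq_empty_iff]; intro i _; exact fun h => hne ⟨i, h⟩
      have h2 : Finset.univ.filter (fun c' => ∃ i, cls i = c' ∧ a' i = b) = ∅ := by
        rw [Finset.filter_eq_empty_iff]; intro c' _
        rintro ⟨i, _, hib⟩; exact hne ⟨i, hib⟩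
      rw [h1, h2]; simpa using Nat.zero_le d
  -- cost of a'
  have hcost' : BPPSCost n m (∑ c, βc c) r cls f a' ≤ r * (∑ c, βc c) + ∑ c, βc c * f c := by
    unfold BPPSCost
    calc ∑ b ∈ Finset.univ.filter (fun b : Fin (∑ c, βc c) => ∃ i, a' i = b),
          (r + ∑ c' ∈ Finset.univ.filter (fun c' => ∃ i, cls i = c' ∧ a' i = b), f c')
        ≤ ∑ b ∈ Finset.univ.filter (fun b : Fin (∑ c, βc c) => ∃ i, a' i = b),
          (r + f (e2.symm b).1) := by
          apply Finset.sum_le_sum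
          intro b _
          have h2 : (∑ c' ∈ Finset.univ.filter (fun c' => ∃ i, cls i = c' ∧ a' i = b), f c')
              ≤ f (e2.symm b).1 := by
            calc _ ≤ ∑ c' ∈ {(e2.symm b).1}, f c' :=
                  Finset.sum_le_sum_of_subset (hsetup b)
              _ = f (e2.symm b).1 := Finset.sum_singleton _ _
          omega
      _ ≤ ∑ b : Fin (∑ c, βc c), (r + f (e2.symm b).1) :=
          Finset.sum_le_sum_of_subset (Finset.filter_subset _ _)
      _ = ∑ σ : Σ c : Fin m, Fin (βc c), (r + f σ.1) :=
          Equiv.sum_comp e2.symm (fun σ => r + f σ.1)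
      _ = ∑ c, βc c * (r + f c) := by
          rw [← Finset.univ_sigma_univ, Finset.sum_sigma]
          simp [Finset.sum_const, Finset.card_univ, mul_comm]
      _ = r * (∑ c, βc c) + ∑ c, βc c * f c := by
          rw [Finset.mul_sum, ← Finset.sum_add_distrib]
          exact Finset.sum_congr rfl fun c _ => by ring
  -- ψ is at most the cost of a'
  have hψle : ψ ≤ r * (∑ c, βc c) + ∑ c, βc c * f c :=
    le_trans (hopt.2 ⟨∑ c, βc c, a', hfeas, rfl⟩) hcost'
  -- decompose ψ
  have hψeq : ψ = r * (Finset.univ.filter (fun b : Fin B => ∃ i, a i = b)).card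
      + ∑ c, (Finset.univ.filter (fun b : Fin B => ∃ i, cls i = c ∧ a i = b)).card * f c := by
    rw [← hcost]
    unfold BPPSCost
    rw [Finset.sum_add_distrib, Finset.sum_const, smul_eq_mul, mul_comm]
    congr 1
    have h2 : ∀ b : Fin B,
        (if (∃ i, a i = b) then
          (∑ c' ∈ Finset.univ.filter (fun c' => ∃ i, cls i = c' ∧ a i = b), f c') else 0)
        = ∑ c' : Fin m, if (∃ i, cls i = c' ∧ a i = b) then f c' else 0 := by
      intro b
      by_cases hb : ∃ i, a i = b
      · rw [if_pos hb, Finset.sum_filter]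
      · rw [if_neg hb]
        symm
        apply Finset.sum_eq_zero
        intro c' _
        rw [if_neg]
        rintro ⟨i, _, hib⟩; exact hb ⟨i, hib⟩
    rw [Finset.sum_filter, Finset.sum_congr rfl (fun b _ => h2 b), Finset.sum_comm]
    refine Finset.sum_congr rfl fun c _ => ?_
    rw [← Finset.sum_filter, Finset.sum_const, smul_eq_mul, mul_comm]
  -- conclude
  have h3 : ∑ c, βc c * f c
      ≤ ∑ c, (Finset.univ.filter (fun b : Fin B => ∃ i, cls i = c ∧ a i = b)).card * f c :=
    Finset.sum_le_sum fun c _ => Nat.mul_le_mul_right _ (hβn c)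
  have h4 : r * (Finset.univ.filter (fun b : Fin B => ∃ i, a i = b)).card + ∑ c, βc c * f c
      ≤ r * (∑ c, βc c) + ∑ c, βc c * f c := by
    calc r * (Finset.univ.filter (fun b : Fin B => ∃ i, a i = b)).card + ∑ c, βc c * f c
        ≤ r * (Finset.univ.filter (fun b : Fin B => ∃ i, a i = b)).card
          + ∑ c, (Finset.univ.filter (fun b : Fin B => ∃ i, cls i = c ∧ a i = b)).card * f c :=
          Nat.add_le_add_left h3 _
      _ = ψ := hψeq.symm
      _ ≤ _ := hψle
  exact Nat.le_of_mul_le_mul_left (Nat.add_le_add_iff_right.1 h4) hr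
end

section
/- For every class c with β_c ≥ 2 (its items cannot fit into one bin of capacity d − s_c), the inequality Σ_{i∈I_c} w_i + γ_c s_c > β_c d / 2 holds, where γ_c = ⌈(Σ_{i∈I_c} w_i)/(d − s_c)⌉. -/
/-- A packing of `p` items with weights `w` into `k` bins of capacity `cap`. -/
def IsPacking (p : ℕ) (w : Fin p → ℕ) (cap k : ℕ) : Prop :=
  ∃ a : Fin p → Fin k,
    ∀ b : Fin k, ∑ i ∈ Finset.univ.filter (fun i => a i = b), w i ≤ cap

lemma key_packing (p : ℕ) (w : Fin p → ℕ) (cap β : ℕ)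
    (hβ : IsLeast {k | IsPacking p w cap k} β) (h2 : 2 ≤ β) :
    β * (cap + 1) ≤ 2 * ∑ i, w i := by
  obtain ⟨m, rfl⟩ : ∃ m, β = m + 1 := ⟨β - 1, (Nat.succ_pred_eq_of_pos (by omega)).symm⟩
  have hm : 0 < m := by omega
  obtain ⟨⟨a, ha⟩, hmin⟩ := hβ
  set L : Fin (m + 1) → ℕ := fun b => ∑ i ∈ Finset.univ.filter (fun i => a i = b), w i with hL
  have hsum : ∑ b, L b = ∑ i, w i := by
    rw [hL]
    exact Finset.sum_fiberwise _ _ _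
  have pair : ∀ b1 b2 : Fin (m + 1), b1 ≠ b2 → cap + 1 ≤ L b1 + L b2 := by
    intro b1 b2 hne
    by_contra hcon
    push_neg at hcon
    have hle : L b1 + L b2 ≤ cap := by omega
    -- construct a packing into m bins
    set e := finSuccEquiv' b2 with he
    set merge : Fin p → Fin (m + 1) := fun i => if a i = b2 then b1 else a i with hmerge
    have hmne : ∀ i, merge i ≠ b2 := by
      intro i
      simp only [hmerge]
      split <;> simp_all
    set a' : Fin p → Fin m := fun i => (e (merge i)).getD ⟨0, hm⟩ with ha'
    have ha'c : ∀ i (c : Fin m), a' i = c ↔ merge i = b2.succAbove c := by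
      intro i c
      have h1 : e (merge i) ≠ none := by
        intro h
        apply hmne i
        have := congrArg e.symm h
        simpa [he, finSuccEquiv'_symm_none] using this
      obtain ⟨j, hj⟩ := Option.ne_none_iff_exists'.mp h1
      have hmi : merge i = b2.succAbove j := by
        have := congrArg e.symm hj
        simpa [he, finSuccEquiv'_symm_some] using this
      have ha'j : a' i = j := by simp [ha', hj]
      rw [ha'j, hmi]
      exact ⟨fun h => h ▸ rfl, fun h => Fin.succAbove_right_injective h⟩
    have hpack : IsPacking p w cap m := by
      refine ⟨a', fun c => ?_⟩
      have hfil : (Finset.univ.filter (fun i => a' i = c)) =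
          (Finset.univ.filter (fun i => merge i = b2.succAbove c)) := by
        ext i; simp [ha'c]
      rw [hfil]
      set b := b2.succAbove c with hb
      have hbne : b ≠ b2 := Fin.succAbove_ne b2 c
      by_cases hbb : b = b1
      · subst hbb
        have : (Finset.univ.filter (fun i => merge i = b)) =
            (Finset.univ.filter (fun i => a i = b)) ∪
            (Finset.univ.filter (fun i => a i = b2)) := by
          ext i
          simp only [Finset.mem_filter, Finset.mem_union, Finset.mem_univ, true_and, hmerge]
          split <;> simp_all
        rw [this, Finset.sum_union]
        · exact hle
        · rw [Finset.disjoint_filter]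
          intro i _ h1 h2
          exact hne (h1 ▸ h2 ▸ rfl)
      · have hb2b : ¬ b2 = b := fun h => hbne h.symm
        have : (Finset.univ.filter (fun i => merge i = b)) =
            (Finset.univ.filter (fun i => a i = b)) := by
          ext i
          simp only [Finset.mem_filter, Finset.mem_univ, true_and, hmerge]
          split <;> simp_all [Ne.symm hbb] <;> exact fun h => hbb h.symm
        rw [this]
        exact le_trans (ha b) (by omega)
    have := hmin hpack
    omega
  -- sum over b of (L b + L (b+1)) = 2 * total
  have hrot : ∑ b : Fin (m + 1), L (b + 1) = ∑ b, L b :=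
    Fintype.sum_equiv (Equiv.addRight 1) _ _ (fun b => rfl)
  have hbound : (m + 1) * (cap + 1) ≤ ∑ b : Fin (m + 1), (L b + L (b + 1)) := by
    calc (m + 1) * (cap + 1) = ∑ _b : Fin (m + 1), (cap + 1) := by
          simp [Finset.sum_const, mul_comm]
      _ ≤ ∑ b : Fin (m + 1), (L b + L (b + 1)) := by
          apply Finset.sum_le_sum
          intro b _
          apply pair
          intro h
          have hb : (b : ℕ) < m + 1 := b.isLt
          have h1 : ((b : ℕ) + 1) % (m + 1) = (b : ℕ) := by
            have := congrArg Fin.val h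
            simpa [Fin.val_add, Fin.val_one'] using this.symm
          rcases Nat.lt_or_ge (b : ℕ) m with hx | hx
          · rw [Nat.mod_eq_of_lt (by omega)] at h1; omega
          · have hxm : (b : ℕ) = m := by omega
            rw [hxm, Nat.mod_self] at h1; omega
  rw [Finset.sum_add_distrib, hrot, hsum] at hbound
  omega

/-- For a class whose items cannot fit in one bin of capacity `d - s`
(`β ≥ 2`), we have `Σ w_i + γ s > β d / 2` with `γ = ⌈(Σ w_i)/(d - s)⌉`. -/
theorem stmt16 (p d s : ℕ) (w : Fin p → ℕ)
    (hw : ∀ i, 0 < w i) (hws : ∀ i, w i + s ≤ d) (hd : 0 < d)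
    (β : ℕ) (hβ : IsLeast {k | IsPacking p w (d - s) k} β) (h2 : 2 ≤ β) :
    ((β : ℚ) * d) / 2 <
      (∑ i, (w i : ℚ)) + ((⌈(∑ i, (w i : ℚ)) / ((d : ℚ) - s)⌉ : ℤ) : ℚ) * s := by
  have hp : 0 < p := by
    by_contra hp
    push_neg at hp
    interval_cases p
    have : IsPacking 0 w (d - s) 0 := ⟨Fin.elim0, fun b => b.elim0⟩
    have := hβ.2 this
    omega
  have hsd : s < d := by
    have := hws ⟨0, hp⟩
    have := hw ⟨0, hp⟩
    omega
  have hkey := key_packing p w (d - s) β hβ h2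
  set W : ℕ := ∑ i, w i with hW
  have hWc : (∑ i, (w i : ℚ)) = (W : ℚ) := by rw [hW]; push_cast; ring
  rw [hWc]
  have hcapc : ((d - s : ℕ) : ℚ) = (d : ℚ) - s := by
    rw [Nat.cast_sub hsd.le]
  set cap : ℚ := (d : ℚ) - s with hcap
  have hcap0 : 0 < cap := by
    rw [hcap]
    have : (s : ℚ) < d := by exact_mod_cast hsd
    linarith
  have hkeyQ : (β : ℚ) * (cap + 1) ≤ 2 * W := by
    have : ((β * ((d - s) + 1) : ℕ) : ℚ) ≤ ((2 * W : ℕ) : ℚ) := by exact_mod_cast hkey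
    push_cast at this
    rw [hcapc] at this
    linarith
  have hγ : (W : ℚ) / cap ≤ (⌈(W : ℚ) / cap⌉ : ℚ) := Int.le_ceil _
  set γ : ℚ := (⌈(W : ℚ) / cap⌉ : ℚ) with hγd
  have hγs : (W : ℚ) * s / cap ≤ γ * s := by
    have hs0 : (0 : ℚ) ≤ s := by positivity
    calc (W : ℚ) * s / cap = ((W : ℚ) / cap) * s := by ring
      _ ≤ γ * s := mul_le_mul_of_nonneg_right hγ hs0
  have hβ0 : (0 : ℚ) < β := by exact_mod_cast (by omega : 0 < β)
  have hβcap : (β : ℚ) * cap < 2 * W := by nlinarith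
  have hWd : (β : ℚ) * d / 2 < (W : ℚ) * d / cap := by
    rw [div_lt_div_iff₀ (by norm_num) hcap0]
    have hd0 : (0 : ℚ) < d := by exact_mod_cast hd
    nlinarith
  have hsplit : (W : ℚ) * d / cap = (W : ℚ) + (W : ℚ) * s / cap := by
    field_simp
    rw [hcap]
    ring
  linarith
end

section
/- If r = 0, the BPPS decomposes by class: the optimal value equals Σ_{c∈C} f_c β_c, where β_c is the minimum number of bins of capacity d − s_c needed to pack the items of class c. -/
/-- The zero-bin-cost BPPS cost counts, for each class, `f c` times the number of
bins in which class `c` appears. -/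
lemma bppsCost_eq (n m B : ℕ) (cls : Fin n → Fin m) (f : Fin m → ℕ)
    (a : Fin n → Fin B) :
    BPPSCost n m B 0 cls f a =
      ∑ c, f c * (Finset.univ.filter (fun b : Fin B => ∃ i, cls i = c ∧ a i = b)).card := by
  unfold BPPSCost
  simp only [zero_add]
  have h1 : ∑ b ∈ Finset.univ.filter (fun b : Fin B => ∃ i, a i = b),
      (∑ c ∈ Finset.univ.filter (fun c => ∃ i, cls i = c ∧ a i = b), f c) =
      ∑ b : Fin B, ∑ c ∈ Finset.univ.filter (fun c => ∃ i, cls i = c ∧ a i = b), f c := by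
    apply Finset.sum_subset (Finset.filter_subset _ _)
    intro b _ hb
    simp only [Finset.mem_filter, Finset.mem_univ, true_and] at hb
    rw [Finset.filter_false_of_mem, Finset.sum_empty]
    intro c _ hc
    exact hb ⟨hc.choose, hc.choose_spec.2⟩
  rw [h1]
  simp_rw [Finset.sum_filter]
  rw [Finset.sum_comm]
  apply Finset.sum_congr rfl
  intro c _
  rw [← Finset.sum_filter, Finset.sum_const, smul_eq_mul, mul_comm]

/-- From a feasible BPPS solution, each class `c` can be packed into as many bins
of capacity `d - s c` as the number of bins in which it appears. -/
lemma classPack_of_feas (n m B d : ℕ) (cls : Fin n → Fin m) (w : Fin n → ℕ)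
    (s : Fin m → ℕ) (a : Fin n → Fin B) (hfeas : BPPSFeas n m B d cls w s a) (c : Fin m) :
    ClassPack n m cls w (d - s c) c
      ((Finset.univ.filter (fun b : Fin B => ∃ i, cls i = c ∧ a i = b)).card) := by
  classical
  set S := Finset.univ.filter (fun b : Fin B => ∃ i, cls i = c ∧ a i = b) with hS
  have key : ∀ i : {i : Fin n // cls i = c}, a i.1 ∈ S := by
    intro i
    simp only [hS, Finset.mem_filter, Finset.mem_univ, true_and]
    exact ⟨i.1, i.2, rfl⟩
  let e : ↥S ≃ Fin S.card := Fintype.equivFinOfCardEq (Fintype.card_coe S)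
  refine ⟨fun i => e ⟨a i.1, key i⟩, ?_⟩
  intro b
  have hb0 : (e.symm b).1 ∈ S := (e.symm b).2
  set b0 : Fin B := (e.symm b).1 with hb0def
  have hfilter : Finset.univ.filter (fun i : {i : Fin n // cls i = c} => e ⟨a i.1, key i⟩ = b)
      = Finset.univ.filter (fun i : {i : Fin n // cls i = c} => a i.1 = b0) := by
    ext i
    simp only [Finset.mem_filter, Finset.mem_univ, true_and]
    constructor
    · intro h
      have h2 : (⟨a i.1, key i⟩ : ↥S) = e.symm b := by rw [← h, Equiv.symm_apply_apply]
      exact congrArg Subtype.val h2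
    · intro h
      have h2 : (⟨a i.1, key i⟩ : ↥S) = e.symm b := Subtype.ext h
      rw [h2, Equiv.apply_symm_apply]
  rw [hfilter]
  have hsub : ∑ i ∈ Finset.univ.filter (fun i : {i : Fin n // cls i = c} => a i.1 = b0), w i.1
      ≤ ∑ i ∈ Finset.univ.filter (fun i : Fin n => a i = b0), w i := by
    rw [← Finset.sum_image (g := Subtype.val) (f := w)
      (fun x _ y _ h => Subtype.ext h)]
    apply Finset.sum_le_sum_of_subset
    intro i hi
    simp only [Finset.mem_image, Finset.mem_filter, Finset.mem_univ, true_and] at hi ⊢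
    obtain ⟨x, hx, rfl⟩ := hi
    exact hx
  have hc : c ∈ Finset.univ.filter (fun c' => ∃ i, cls i = c' ∧ a i = b0) := by
    simp only [hS, Finset.mem_filter, Finset.mem_univ, true_and] at hb0 ⊢
    exact hb0
  have hs : s c ≤ ∑ c' ∈ Finset.univ.filter (fun c' => ∃ i, cls i = c' ∧ a i = b0), s c' :=
    Finset.single_le_sum (fun _ _ => Nat.zero_le _) hc
  apply Nat.le_sub_of_add_le
  calc (∑ i ∈ Finset.univ.filter (fun i : {i : Fin n // cls i = c} => a i.1 = b0), w i.1) + s c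
      ≤ (∑ i ∈ Finset.univ.filter (fun i : Fin n => a i = b0), w i) +
        ∑ c' ∈ Finset.univ.filter (fun c' => ∃ i, cls i = c' ∧ a i = b0), s c' :=
        add_le_add hsub hs
    _ ≤ d := hfeas b0

/-- When the bin cost is `r = 0`, the BPPS decomposes by class: the optimal
value equals `Σ_c f_c β_c`, where `β_c` is the minimum number of bins of
capacity `d - s_c` needed to pack the items of class `c`. -/
theorem stmt19 (n m d : ℕ) (cls : Fin n → Fin m) (w : Fin n → ℕ) (s f : Fin m → ℕ)
    (hw : ∀ i, 0 < w i) (hd : 0 < d)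
    (hws : ∀ i, w i + s (cls i) ≤ d)
    (βc : Fin m → ℕ)
    (hβ : ∀ c, IsLeast {k | ClassPack n m cls w (d - s c) c k} (βc c)) :
    IsLeast {v : ℕ | ∃ (B : ℕ) (a : Fin n → Fin B),
        BPPSFeas n m B d cls w s a ∧ BPPSCost n m B 0 cls f a = v}
      (∑ c, f c * βc c) := by
  classical
  -- Lower bound.
  have hlb : ∀ v ∈ {v : ℕ | ∃ (B : ℕ) (a : Fin n → Fin B),
      BPPSFeas n m B d cls w s a ∧ BPPSCost n m B 0 cls f a = v},
      (∑ c, f c * βc c) ≤ v := by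
    rintro v ⟨B, a, hfeas, rfl⟩
    rw [bppsCost_eq]
    apply Finset.sum_le_sum
    intro c _
    exact Nat.mul_le_mul_left _ ((hβ c).2 (classPack_of_feas n m B d cls w s a hfeas c))
  constructor
  · -- Membership: construct an explicit solution.
    choose pack hpack using fun c => (hβ c).1
    set B := Fintype.card (Σ c : Fin m, Fin (βc c)) with hB
    let e : (Σ c : Fin m, Fin (βc c)) ≃ Fin B := Fintype.equivFin _
    set a : Fin n → Fin B := fun i => e ⟨cls i, pack (cls i) ⟨i, rfl⟩⟩ with ha
    have sigma_eq : ∀ (i : Fin n) (c : Fin m) (h : cls i = c),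
        (⟨cls i, pack (cls i) ⟨i, rfl⟩⟩ : Σ c, Fin (βc c)) = ⟨c, pack c ⟨i, h⟩⟩ := by
      intro i c h; subst h; rfl
    have hfeas : BPPSFeas n m B d cls w s a := by
      intro b
      obtain ⟨x, hx⟩ : ∃ x : Σ c : Fin m, Fin (βc c), e x = b := ⟨e.symm b, e.apply_symm_apply b⟩
      obtain ⟨c, j⟩ := x
      have hcls : ∀ i, a i = b → cls i = c := by
        intro i h
        have : (⟨cls i, pack (cls i) ⟨i, rfl⟩⟩ : Σ c, Fin (βc c)) = ⟨c, j⟩ :=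
          e.injective (h.trans hx.symm)
        exact congrArg Sigma.fst this
      by_cases hne : ∃ i, a i = b
      · obtain ⟨i0, hi0⟩ := hne
        have hc0 := hcls i0 hi0
        have hscd : s c ≤ d := le_trans (Nat.le_add_left _ _) (hc0 ▸ hws i0)
        -- weight bound
        have hwset : Finset.univ.filter (fun i : Fin n => a i = b)
            = (Finset.univ.filter
                (fun i : {i : Fin n // cls i = c} => pack c i = j)).image Subtype.val := by
          ext i
          simp only [Finset.mem_filter, Finset.mem_univ, true_and, Finset.mem_image]
          constructor
          · intro h
            have hic := hcls i h
            have hsig : (⟨c, pack c ⟨i, hic⟩⟩ : Σ c, Fin (βc c)) = ⟨c, j⟩ := by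
              rw [← sigma_eq i c hic]
              exact e.injective (h.trans hx.symm)
            have hj : pack c ⟨i, hic⟩ = j := by
              have := (Sigma.mk.inj_iff.mp hsig).2
              exact eq_of_heq this
            exact ⟨⟨i, hic⟩, hj, rfl⟩
          · rintro ⟨⟨i', hi'⟩, hj, rfl⟩
            show e ⟨cls i', pack (cls i') ⟨i', rfl⟩⟩ = b
            rw [sigma_eq i' c hi', hj, hx]
        have hwle : ∑ i ∈ Finset.univ.filter (fun i : Fin n => a i = b), w i ≤ d - s c := by
          rw [hwset, Finset.sum_image (fun x _ y _ h => Subtype.ext h)]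
          exact hpack c j
        -- setup bound
        have hsle : ∑ c' ∈ Finset.univ.filter (fun c' => ∃ i, cls i = c' ∧ a i = b), s c'
            ≤ s c := by
          have hsubset : Finset.univ.filter (fun c' => ∃ i, cls i = c' ∧ a i = b)
              ⊆ {c} := by
            intro c' hc'
            simp only [Finset.mem_filter, Finset.mem_univ, true_and,
              Finset.mem_singleton] at hc' ⊢
            obtain ⟨i, h1, h2⟩ := hc'
            rw [← h1]; exact hcls i h2
          calc ∑ c' ∈ Finset.univ.filter (fun c' => ∃ i, cls i = c' ∧ a i = b), s c'
              ≤ ∑ c' ∈ ({c} : Finset (Fin m)), s c' :=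
                Finset.sum_le_sum_of_subset hsubset
            _ = s c := Finset.sum_singleton _ _
        calc (∑ i ∈ Finset.univ.filter (fun i => a i = b), w i) +
            (∑ c' ∈ Finset.univ.filter (fun c' => ∃ i, cls i = c' ∧ a i = b), s c')
            ≤ (d - s c) + s c := add_le_add hwle hsle
          _ = d := Nat.sub_add_cancel hscd
      · have h1 : Finset.univ.filter (fun i : Fin n => a i = b) = ∅ := by
          apply Finset.filter_false_of_mem
          intro i _ h; exact hne ⟨i, h⟩
        have h2 : Finset.univ.filter (fun c' => ∃ i, cls i = c' ∧ a i = b) = ∅ := by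
          apply Finset.filter_false_of_mem
          intro c' _ h; exact hne ⟨h.choose, h.choose_spec.2⟩
        rw [h1, h2]
        simpa using Nat.zero_le d
    refine ⟨B, a, hfeas, ?_⟩
    have hle : BPPSCost n m B 0 cls f a ≤ ∑ c, f c * βc c := by
      rw [bppsCost_eq]
      apply Finset.sum_le_sum
      intro c _
      apply Nat.mul_le_mul_left
      have hsubset : Finset.univ.filter (fun b : Fin B => ∃ i, cls i = c ∧ a i = b)
          ⊆ Finset.univ.image (fun j : Fin (βc c) => e ⟨c, j⟩) := by
        intro b hb
        simp only [Finset.mem_filter, Finset.mem_univ, true_and, Finset.mem_image] at hb ⊢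
        obtain ⟨i, h1, h2⟩ := hb
        refine ⟨pack c ⟨i, h1⟩, ?_⟩
        rw [← h2]
        show e ⟨c, pack c ⟨i, h1⟩⟩ = e ⟨cls i, pack (cls i) ⟨i, rfl⟩⟩
        rw [sigma_eq i c h1]
      calc (Finset.univ.filter (fun b : Fin B => ∃ i, cls i = c ∧ a i = b)).card
          ≤ (Finset.univ.image (fun j : Fin (βc c) => e ⟨c, j⟩)).card :=
            Finset.card_le_card hsubset
        _ ≤ (Finset.univ : Finset (Fin (βc c))).card := Finset.card_image_le
        _ = βc c := by simp
    have hge : ∑ c, f c * βc c ≤ BPPSCost n m B 0 cls f a :=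
      hlb _ ⟨B, a, hfeas, rfl⟩
    exact le_antisymm hle hge
  · exact hlb
end
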